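/- Let μ and ν be finite positive Borel measures on the circle S¹ with μ absolutely continuous with respect to ν. If ν is mixing (i.e., ν̂(n) → 0 as |n| → ∞), then μ is mixing. -/

import Mathlib

/-!
By Radon–Nikodym, `dμ = f dν` with `f ∈ L¹(ν)`, so `μ̂(n) = ∫ eₙ f dν`. For a trigonometric
polynomial `P`, `n ↦ ∫ eₙ P dν` is a finite combination of shifts of `ν̂`, hence tends to `0`,
and `|∫ eₙ f dν - ∫ eₙ P dν| ≤ ‖f - P‖_{L¹(ν)}` uniformly in `n`. Trigonometric polynomials
are dense in `L¹(ν)`: continuous functions are, and trigonometric polynomials are uniformly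
dense among those. So `μ̂` is a uniform limit of sequences tending to `0`.
-/

open MeasureTheory Filter Topology

theorem tendsto_zero_of_forall_exists_norm_sub_le {ι E : Type*} [SeminormedAddCommGroup E]
    {l : Filter ι} {a : ι → E}
    (h : ∀ ε > 0, ∃ b : ι → E, Tendsto b l (𝓝 0) ∧ ∀ i, ‖a i - b i‖ ≤ ε) :
    Tendsto a l (𝓝 0) := by
  rw [Metric.tendsto_nhds]
  intro ε hε
  obtain ⟨b, hb, hab⟩ := h (ε / 2) (half_pos hε)
  filter_upwards [Metric.tendsto_nhds.mp hb (ε / 2) (half_pos hε)] with i hi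
  rw [dist_zero_right] at hi ⊢
  calc ‖a i‖ ≤ ‖a i - b i‖ + ‖b i‖ := norm_le_norm_sub_add _ _
    _ < ε := by linarith [hab i]

theorem MeasureTheory.Integrable.exists_mem_integral_norm_sub_le_of_dense
    {X E : Type*} [TopologicalSpace X] [CompactSpace X] [NormalSpace X] [MeasurableSpace X]
    [BorelSpace X] [NormedAddCommGroup E] [NormedSpace ℝ E]
    {ν : Measure X} [IsFiniteMeasure ν] [ν.WeaklyRegular]
    {S : Set C(X, E)} (hS : Dense S) {f : X → E} (hf : Integrable f ν) {ε : ℝ} (hε : 0 < ε) :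
    ∃ P ∈ S, ∫ x, ‖f x - P x‖ ∂ν ≤ ε := by
  obtain ⟨g, hfg, hg⟩ := hf.exists_boundedContinuous_integral_sub_le (half_pos hε)
  set δ := ε / 2 / (ν.real Set.univ + 1)
  have hδ : 0 < δ := by positivity
  obtain ⟨P, hPS, hPg⟩ := hS.exists_dist_lt g.toContinuousMap hδ
  have hP : Integrable P ν := P.continuous.integrable_of_hasCompactSupport
    (HasCompactSupport.of_compactSpace _)
  have hgP : ∀ x, ‖g x - P x‖ ≤ δ := fun x => by
    rw [← dist_eq_norm]
    exact (ContinuousMap.dist_apply_le_dist (f := g.toContinuousMap) x).trans hPg.le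
  refine ⟨P, hPS, ?_⟩
  calc ∫ x, ‖f x - P x‖ ∂ν ≤ ∫ x, ‖f x - g x‖ + ‖g x - P x‖ ∂ν :=
        integral_mono (hf.sub hP).norm ((hf.sub hg).norm.add (hg.sub hP).norm)
          fun x => norm_sub_le_norm_sub_add_norm_sub _ _ _
    _ = ∫ x, ‖f x - g x‖ ∂ν + ∫ x, ‖g x - P x‖ ∂ν :=
        integral_add (hf.sub hg).norm (hg.sub hP).norm
    _ ≤ ε / 2 + δ * ν.real Set.univ := by
        gcongr
        simpa [mul_comm] using integral_mono (hg.sub hP).norm (integrable_const δ) hgP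
    _ ≤ ε := by
        have : δ * ν.real Set.univ ≤ ε / 2 := by
          rw [div_mul_eq_mul_div, div_le_iff₀ (by positivity)]
          nlinarith [measureReal_nonneg (μ := ν) (s := Set.univ)]
        linarith

theorem MeasureTheory.integral_eq_integral_mul_rnDeriv {α : Type*} [MeasurableSpace α]
    {μ ν : Measure α} [SigmaFinite μ] [SigmaFinite ν] (hμν : μ ≪ ν) (g : α → ℂ) :
    ∫ x, g x ∂μ = ∫ x, g x * ((μ.rnDeriv ν x).toReal : ℂ) ∂ν := by
  simp_rw [mul_comm (g _), ← Complex.real_smul]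
  exact (integral_rnDeriv_smul hμν).symm

section fourier

variable {T : ℝ}

theorem norm_fourier_apply (n : ℤ) (x : AddCircle T) : ‖fourier n x‖ = 1 :=
  Circle.norm_coe _

theorem dense_span_fourier [Fact (0 < T)] :
    Dense (Submodule.span ℂ (Set.range (fourier (T := T))) : Set C(AddCircle T, ℂ)) :=
  Submodule.dense_iff_topologicalClosure_eq_top.mpr span_fourier_closure_eq_top

theorem MeasureTheory.Integrable.fourier_mul {ν : Measure (AddCircle T)} {f : AddCircle T → ℂ}
    (hf : Integrable f ν) (n : ℤ) : Integrable (fun t => fourier n t * f t) ν :=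
  hf.bdd_mul (fourier n).continuous.aestronglyMeasurable
    (c := 1) (Eventually.of_forall fun t => (norm_fourier_apply n t).le)

theorem norm_integral_fourier_mul_sub_le {ν : Measure (AddCircle T)} {f g : AddCircle T → ℂ}
    (hf : Integrable f ν) (hg : Integrable g ν) (n : ℤ) :
    ‖∫ t, fourier n t * f t ∂ν - ∫ t, fourier n t * g t ∂ν‖ ≤ ∫ t, ‖f t - g t‖ ∂ν := by
  rw [← integral_sub (hf.fourier_mul n) (hg.fourier_mul n)]
  refine (norm_integral_le_integral_norm _).trans_eq (integral_congr_ae (.of_forall fun t => ?_))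
  simp only [← mul_sub, norm_mul, norm_fourier_apply, one_mul]

theorem tendsto_integral_fourier_mul_of_mem_span [Fact (0 < T)] {ν : Measure (AddCircle T)}
    [IsFiniteMeasure ν]
    (hν : Tendsto (fun n : ℤ => ∫ t, fourier n t ∂ν) cofinite (𝓝 0)) {P : C(AddCircle T, ℂ)}
    (hP : P ∈ Submodule.span ℂ (Set.range (fourier (T := T)))) :
    Tendsto (fun n : ℤ => ∫ t, fourier n t * P t ∂ν) cofinite (𝓝 0) := by
  have hint (Q : C(AddCircle T, ℂ)) (n : ℤ) : Integrable (fun t => fourier n t * Q t) ν :=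
    (Q.continuous.integrable_of_hasCompactSupport (.of_compactSpace _)).fourier_mul n
  induction hP using Submodule.span_induction with
  | mem Q hQ =>
    obtain ⟨m, rfl⟩ := hQ
    simp_rw [← fourier_add]
    exact hν.comp (add_left_injective m).tendsto_cofinite
  | zero => simp
  | add Q R _ _ hQ hR =>
    simp_rw [ContinuousMap.add_apply, mul_add]
    simpa only [integral_add (hint Q _) (hint R _), add_zero] using hQ.add hR
  | smul c Q _ hQ =>
    simp_rw [ContinuousMap.smul_apply, smul_eq_mul, mul_left_comm _ c, integral_const_mul]
    simpa using hQ.const_mul c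

end fourier

/-- If `μ ≪ ν` are finite positive Borel measures on the circle and `ν` is mixing
(Rajchman), i.e. `ν̂(n) → 0` as `|n| → ∞`, then `μ` is mixing. -/
theorem mixing_of_absolutelyContinuous
    (μ ν : Measure (AddCircle (1 : ℝ))) [IsFiniteMeasure μ] [IsFiniteMeasure ν]
    (hac : μ.AbsolutelyContinuous ν)
    (hν : Tendsto (fun n : ℤ => ∫ t, fourier n t ∂ν) cofinite (nhds 0)) :
    Tendsto (fun n : ℤ => ∫ t, fourier n t ∂μ) cofinite (nhds 0) := by
  simp_rw [integral_eq_integral_mul_rnDeriv hac]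
  set f : AddCircle (1 : ℝ) → ℂ := fun t => ((μ.rnDeriv ν t).toReal : ℂ)
  have hf : Integrable f ν := Measure.integrable_toReal_rnDeriv.ofReal
  refine tendsto_zero_of_forall_exists_norm_sub_le fun ε hε => ?_
  obtain ⟨P, hP, hfP⟩ := hf.exists_mem_integral_norm_sub_le_of_dense dense_span_fourier hε
  have hPint : Integrable P ν :=
    P.continuous.integrable_of_hasCompactSupport (HasCompactSupport.of_compactSpace _)
  exact ⟨_, tendsto_integral_fourier_mul_of_mem_span hν hP,
    fun n => (norm_integral_fourier_mul_sub_le hf hPint n).trans hfP⟩
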